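/- arXiv:1812.03763 — 8 statements merged into one kernel-verified Lean document; each statement's English description precedes it below -/
import Mathlib

section
/- Let p ≥ 2, let m and n₁,…,n_p be positive integers, and let A_i ∈ ℝ^{m×n_i} (i = 1,…,p) be matrices of full column rank. Let ε ∈ ℝ, τ > 0, s > 0, and suppose σ₁ > (1 + (p−1)τ|ε|)/s and σ_i > (1 + (p−2)τ² + τ|ε|)/s for all i = 2,…,p. Then the quadratic form of the parameterized proximal matrix G is positive definite; that is, for every tuple (x₁,…,x_p,λ) with x_i ∈ ℝ^{n_i}, λ ∈ ℝ^m, not all zero, one has (σ₁ + (ε²−1)/s)‖A₁x₁‖² + Σ_{i=2}^{p} (σ_i + (τ²−1)/s)‖A_ix_i‖² − 2ε⟨A₁x₁, λ⟩ − 2τ Σ_{i=2}^{p} ⟨A_ix_i, λ⟩ + s‖λ‖² > 0. -/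
open Matrix Finset

/-- Weighted AM–GM bound on cross dot products. -/
lemma key_amgm {m : ℕ} (y z : Fin m → ℝ) (e c d : ℝ) (hc : 0 ≤ c) (hd : 0 ≤ d)
    (hcd : c * d = 1) :
    2 * e * (y ⬝ᵥ z) ≤ |e| * c * (y ⬝ᵥ y) + |e| * d * (z ⬝ᵥ z) := by
  simp only [dotProduct, Finset.mul_sum, ← Finset.sum_add_distrib]
  refine Finset.sum_le_sum fun i _ => ?_
  have hid : ∀ a b : ℝ, d * (c * a - b) ^ 2 = c * a ^ 2 - 2 * (a * b) + d * b ^ 2 := by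
    intro a b
    have h : d * (c * a - b) ^ 2 = (c * d) * (c * a ^ 2) - 2 * (c * d) * (a * b) + d * b ^ 2 := by
      ring
    rw [hcd] at h
    linarith [h]
  have hid2 : ∀ a b : ℝ, d * (c * a + b) ^ 2 = c * a ^ 2 + 2 * (a * b) + d * b ^ 2 := by
    intro a b
    have h : d * (c * a + b) ^ 2 = (c * d) * (c * a ^ 2) + 2 * (c * d) * (a * b) + d * b ^ 2 := by
      ring
    rw [hcd] at h
    linarith [h]
  have h1 : 0 ≤ c * y i ^ 2 - 2 * (y i * z i) + d * z i ^ 2 := by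
    rw [← hid]; exact mul_nonneg hd (sq_nonneg _)
  have h2 : 0 ≤ c * y i ^ 2 + 2 * (y i * z i) + d * z i ^ 2 := by
    rw [← hid2]; exact mul_nonneg hd (sq_nonneg _)
  have he1 : e ≤ |e| := le_abs_self e
  have he2 : -|e| ≤ e := neg_abs_le e
  rcases le_or_gt 0 (y i * z i) with hab | hab
  · have k1 := mul_nonneg (abs_nonneg e) h1
    have k2 := mul_nonneg (sub_nonneg.mpr he1) hab
    nlinarith [k1, k2]
  · have k1 := mul_nonneg (abs_nonneg e) h2
    have k2 : 0 ≤ (|e| + e) * (-(y i * z i)) :=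
      mul_nonneg (by linarith) (by linarith)
    nlinarith [k1, k2]

/-- Positive definiteness of the quadratic form of the parameterized proximal matrix `G`
of the general parameterized proximal point algorithm. -/
theorem quadratic_form_of_G_pos
    (p m : ℕ) [NeZero p] (hp : 2 ≤ p) (n : Fin p → ℕ)
    (hm : 0 < m) (hn : ∀ i, 0 < n i)
    (A : (i : Fin p) → Matrix (Fin m) (Fin (n i)) ℝ)
    (hA : ∀ i, Function.Injective (A i).mulVec)
    (ε τ s : ℝ) (hτ : 0 < τ) (hs : 0 < s)
    (σ : Fin p → ℝ)
    (hσ1 : σ 0 > (1 + ((p : ℝ) - 1) * τ * |ε|) / s)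
    (hσi : ∀ i : Fin p, i ≠ 0 → σ i > (1 + ((p : ℝ) - 2) * τ ^ 2 + τ * |ε|) / s)
    (x : (i : Fin p) → Fin (n i) → ℝ) (l : Fin m → ℝ)
    (hnz : ¬ ((∀ i, x i = 0) ∧ l = 0)) :
    0 < (σ 0 + (ε ^ 2 - 1) / s) * ((A 0).mulVec (x 0) ⬝ᵥ (A 0).mulVec (x 0))
        + ∑ i ∈ Finset.univ.erase (0 : Fin p),
            (σ i + (τ ^ 2 - 1) / s) * ((A i).mulVec (x i) ⬝ᵥ (A i).mulVec (x i))
        - 2 * ε * ((A 0).mulVec (x 0) ⬝ᵥ l)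
        - 2 * τ * ∑ i ∈ Finset.univ.erase (0 : Fin p), ((A i).mulVec (x i) ⬝ᵥ l)
        + s * (l ⬝ᵥ l) := by
  have hp1 : (1 : ℝ) ≤ (p : ℝ) - 1 := by
    have : (2 : ℝ) ≤ (p : ℝ) := by exact_mod_cast hp
    linarith
  set y : (i : Fin p) → Fin m → ℝ := fun i => (A i).mulVec (x i) with hy
  set Y : Fin p → ℝ := fun i => y i ⬝ᵥ y i with hYdef
  have hYnonneg : ∀ i, 0 ≤ Y i := fun i => Finset.sum_nonneg fun j _ => mul_self_nonneg _
  have hYpos : ∀ i, x i ≠ 0 → 0 < Y i := by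
    intro i hxi
    have hyne : y i ≠ 0 := by
      intro h
      apply hxi
      apply hA i
      simpa [hy, Matrix.mulVec_zero] using h
    have : Y i ≠ 0 := fun h => hyne (dotProduct_self_eq_zero.mp h)
    exact lt_of_le_of_ne (hYnonneg i) (Ne.symm this)
  have hLnonneg : 0 ≤ l ⬝ᵥ l := Finset.sum_nonneg fun j _ => mul_self_nonneg _
  by_cases hx : ∀ i, x i = 0
  · -- all x vanish, so l ≠ 0 and the form reduces to s * ‖l‖²
    have hl : l ≠ 0 := fun h => hnz ⟨hx, h⟩
    have hLpos : 0 < l ⬝ᵥ l :=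
      lt_of_le_of_ne hLnonneg (Ne.symm fun h => hl (dotProduct_self_eq_zero.mp h))
    have hy0 : ∀ i, (A i).mulVec (x i) = 0 := by
      intro i; rw [hx i, Matrix.mulVec_zero]
    simp only [hy0, zero_dotProduct, zero_dotProduct, dotProduct_zero, mul_zero,
      Finset.sum_const_zero, add_zero, sub_zero, zero_add]
    positivity
  · push_neg at hx
    obtain ⟨j, hj⟩ := hx
    -- the weight constants
    set K : ℝ := ((p : ℝ) - 1) * τ + |ε| with hK
    have hKpos : 0 < K := by
      rw [hK]
      nlinarith [abs_nonneg ε]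
    set c : ℝ := K / s with hc
    set d : ℝ := s / K with hd
    have hcpos : 0 < c := div_pos hKpos hs
    have hdpos : 0 < d := div_pos hs hKpos
    have hcd : c * d = 1 := by
      rw [hc, hd]
      field_simp
    have hcs : c * s = K := by
      rw [hc]; field_simp
    have hε2 : |ε| * |ε| = ε ^ 2 := by rw [← sq, sq_abs]
    -- cross-term bounds
    have h0 : 2 * ε * (y 0 ⬝ᵥ l) ≤ |ε| * c * Y 0 + |ε| * d * (l ⬝ᵥ l) :=
      key_amgm (y 0) l ε c d hcpos.le hdpos.le hcd
    have hi : ∀ i ∈ Finset.univ.erase (0 : Fin p),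
        2 * τ * (y i ⬝ᵥ l) ≤ τ * c * Y i + τ * d * (l ⬝ᵥ l) := by
      intro i _
      have := key_amgm (y i) l τ c d hcpos.le hdpos.le hcd
      rwa [abs_of_pos hτ] at this
    have hcard : ((Finset.univ.erase (0 : Fin p)).card : ℝ) = (p : ℝ) - 1 := by
      rw [Finset.card_erase_of_mem (Finset.mem_univ _), Finset.card_univ, Fintype.card_fin]
      have h1p : 1 ≤ p := le_trans (by norm_num) hp
      push_cast [Nat.cast_sub h1p]
      ring
    have hτsum : 2 * τ * (∑ i ∈ Finset.univ.erase (0 : Fin p), (y i ⬝ᵥ l)) ≤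
        τ * c * (∑ i ∈ Finset.univ.erase (0 : Fin p), Y i)
          + ((p : ℝ) - 1) * (τ * d * (l ⬝ᵥ l)) := by
      rw [Finset.mul_sum]
      refine le_trans (Finset.sum_le_sum hi) ?_
      rw [Finset.sum_add_distrib, Finset.sum_const, nsmul_eq_mul, hcard, ← Finset.mul_sum]
    -- the coefficient of ‖l‖² vanishes exactly
    have hL : |ε| * d + ((p : ℝ) - 1) * (τ * d) = s := by
      rw [hd]
      field_simp [hK]
      ring
    have hLL : (|ε| * d + ((p : ℝ) - 1) * (τ * d)) * (l ⬝ᵥ l) = s * (l ⬝ᵥ l) := by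
      rw [hL]
    -- positive coefficients
    have hα0 : 0 < σ 0 + (ε ^ 2 - 1) / s - |ε| * c := by
      rw [gt_iff_lt, div_lt_iff₀ hs] at hσ1
      have hexp : (σ 0 + (ε ^ 2 - 1) / s - |ε| * c) * s
          = σ 0 * s + (ε ^ 2 - 1) - |ε| * (c * s) := by
        field_simp
      have hmul : 0 < (σ 0 + (ε ^ 2 - 1) / s - |ε| * c) * s := by
        rw [hexp, hcs, hK]
        nlinarith [hε2]
      have := div_pos hmul hs
      rwa [mul_div_cancel_right₀ _ hs.ne'] at this
    have hαi : ∀ i ∈ Finset.univ.erase (0 : Fin p),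
        0 < σ i + (τ ^ 2 - 1) / s - τ * c := by
      intro i hi'
      have hine : i ≠ 0 := Finset.ne_of_mem_erase hi'
      have h := hσi i hine
      rw [gt_iff_lt, div_lt_iff₀ hs] at h
      have hexp : (σ i + (τ ^ 2 - 1) / s - τ * c) * s
          = σ i * s + (τ ^ 2 - 1) - τ * (c * s) := by
        field_simp
      have hmul : 0 < (σ i + (τ ^ 2 - 1) / s - τ * c) * s := by
        rw [hexp, hcs, hK]
        nlinarith
      have := div_pos hmul hs
      rwa [mul_div_cancel_right₀ _ hs.ne'] at this
    -- split the sum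
    have hsplit : ∑ i ∈ Finset.univ.erase (0 : Fin p), (σ i + (τ ^ 2 - 1) / s) * Y i
        = ∑ i ∈ Finset.univ.erase (0 : Fin p), (σ i + (τ ^ 2 - 1) / s - τ * c) * Y i
          + τ * c * ∑ i ∈ Finset.univ.erase (0 : Fin p), Y i := by
      rw [Finset.mul_sum, ← Finset.sum_add_distrib]
      exact Finset.sum_congr rfl fun i _ => by ring
    have hTnonneg : 0 ≤ ∑ i ∈ Finset.univ.erase (0 : Fin p),
        (σ i + (τ ^ 2 - 1) / s - τ * c) * Y i :=
      Finset.sum_nonneg fun i hi' => mul_nonneg (hαi i hi').le (hYnonneg i)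
    -- strict positivity of the dominant part
    have hpos : 0 < (σ 0 + (ε ^ 2 - 1) / s - |ε| * c) * Y 0
        + ∑ i ∈ Finset.univ.erase (0 : Fin p), (σ i + (τ ^ 2 - 1) / s - τ * c) * Y i := by
      by_cases hj0 : j = 0
      · have := hYpos 0 (hj0 ▸ hj)
        have h1 : 0 < (σ 0 + (ε ^ 2 - 1) / s - |ε| * c) * Y 0 := mul_pos hα0 this
        linarith
      · have hjmem : j ∈ Finset.univ.erase (0 : Fin p) :=
          Finset.mem_erase.mpr ⟨hj0, Finset.mem_univ j⟩
        have hT : 0 < ∑ i ∈ Finset.univ.erase (0 : Fin p),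
            (σ i + (τ ^ 2 - 1) / s - τ * c) * Y i :=
          Finset.sum_pos' (fun i hi' => mul_nonneg (hαi i hi').le (hYnonneg i))
            ⟨j, hjmem, mul_pos (hαi j hjmem) (hYpos j hj)⟩
        have h1 : 0 ≤ (σ 0 + (ε ^ 2 - 1) / s - |ε| * c) * Y 0 :=
          mul_nonneg hα0.le (hYnonneg 0)
        linarith
    linarith [h0, hτsum, hsplit, hLL, hpos]
end

section
/- Let p ≥ 2 be an integer, ε ∈ ℝ, τ > 0, s > 0, and suppose σ₁ > (1 + (p−1)τ|ε|)/s and σ_i > (1 + (p−2)τ² + τ|ε|)/s for all i = 2,…,p. Then the p×p real symmetric matrix M defined by M₁₁ = σ₁ − 1/s, M_ii = σ_i − 1/s for i = 2,…,p, M₁ⱼ = M_{j1} = −τε/s for j = 2,…,p, and M_ij = −τ²/s for i ≠ j with i,j ≥ 2, is positive definite. -/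
open Matrix Finset
open scoped ComplexOrder

/-!
The parameter region is exactly the condition that `M` is strictly diagonally dominant by rows:
the off-diagonal absolute row sums are `(p - 1) τ |ε| / s` in the first row and
`τ |ε| / s + (p - 2) τ² / s` in the others. A symmetric strictly diagonally dominant matrix with
positive diagonal is positive definite, because by Gershgorin's theorem each of its real
eigenvalues lies within a disc `|μ - M k k| ≤ ∑_{j ≠ k} |M k j|` that avoids `(-∞, 0]`.
-/

theorem Matrix.IsHermitian.posDef_of_sum_norm_offDiag_lt {𝕜 n : Type*} [RCLike 𝕜] [Fintype n]
    [DecidableEq n] {A : Matrix n n 𝕜} (hA : A.IsHermitian)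
    (hdom : ∀ k, ∑ j ∈ univ.erase k, ‖A k j‖ < RCLike.re (A k k)) : A.PosDef := by
  refine hA.posDef_iff_eigenvalues_pos.mpr fun i => ?_
  have hμ : Module.End.HasEigenvalue (toLin' A) (hA.eigenvalues i : 𝕜) := by
    rw [Module.End.hasEigenvalue_iff_mem_spectrum, spectrum_toLin']
    exact spectrum.algebraMap_mem (R := ℝ) 𝕜 (hA.eigenvalues_mem_spectrum_real i)
  obtain ⟨k, hk⟩ := eigenvalue_mem_ball hμ
  rw [Metric.mem_closedBall, dist_comm, dist_eq_norm] at hk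
  have hre : RCLike.re (A k k) - hA.eigenvalues i ≤ ‖A k k - (hA.eigenvalues i : 𝕜)‖ := by
    simpa using RCLike.re_le_norm (A k k - (hA.eigenvalues i : 𝕜))
  linarith [hdom k]

section RowSums

variable {α R : Type*} [Fintype α] [DecidableEq α] [Ring R]

theorem Finset.sum_univ_erase_eq_of_eq_const (a : α) {f : α → R} {c : R}
    (hf : ∀ j ≠ a, f j = c) : ∑ j ∈ univ.erase a, f j = (Fintype.card α - 1) * c := by
  rw [sum_eq_card_nsmul fun j hj => hf j (ne_of_mem_erase hj), nsmul_eq_mul,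
    card_erase_of_mem (mem_univ a), card_univ,
    Nat.cast_sub (Fintype.card_pos_iff.mpr ⟨a⟩), Nat.cast_one]

theorem Finset.sum_univ_erase_eq_add_of_eq_const {a i : α} (hi : i ≠ a) {f : α → R} {c : R}
    (hf : ∀ j ≠ i, j ≠ a → f j = c) :
    ∑ j ∈ univ.erase i, f j = f a + (Fintype.card α - 2) * c := by
  have ha : a ∈ univ.erase i := mem_erase.mpr ⟨hi.symm, mem_univ a⟩
  have hcard : 2 ≤ Fintype.card α := Fintype.one_lt_card_iff.mpr ⟨i, a, hi⟩
  rw [← add_sum_erase _ _ ha, sum_eq_card_nsmul fun j hj =>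
      hf j (ne_of_mem_erase (mem_of_mem_erase hj)) (ne_of_mem_erase hj), nsmul_eq_mul,
    card_erase_of_mem ha, card_erase_of_mem (mem_univ i), card_univ, Nat.sub_sub,
    Nat.cast_sub hcard, Nat.cast_ofNat]

end RowSums

theorem transformed_block_posDef_general
    (p : ℕ) [NeZero p]
    (ε τ s : ℝ) (hτ : 0 < τ) (hs : 0 < s)
    (σ : Fin p → ℝ)
    (hσ1 : σ 0 > (1 + ((p : ℝ) - 1) * τ * |ε|) / s)
    (hσi : ∀ i : Fin p, i ≠ 0 → σ i > (1 + ((p : ℝ) - 2) * τ ^ 2 + τ * |ε|) / s)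
    (M : Matrix (Fin p) (Fin p) ℝ)
    (hM : ∀ i j, M i j =
      if i = j then σ i - 1 / s
      else if i = 0 ∨ j = 0 then -(τ * ε) / s
      else -(τ ^ 2) / s) :
    M.PosDef := by
  have hsymm : M.IsHermitian := IsHermitian.ext fun i j => by
    by_cases hij : i = j
    · rw [hij, star_trivial]
    · rw [star_trivial, hM, hM, if_neg hij, if_neg (Ne.symm hij)]
      exact if_congr or_comm rfl rfl
  have hborder : ∀ i j, i ≠ j → (i = 0 ∨ j = 0) → ‖M i j‖ = τ * |ε| / s := fun i j hij h0 => by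
    rw [hM, if_neg hij, if_pos h0, Real.norm_eq_abs, abs_div, abs_neg, abs_mul, abs_of_pos hτ,
      abs_of_pos hs]
  have hinner : ∀ i j, i ≠ j → i ≠ 0 → j ≠ 0 → ‖M i j‖ = τ ^ 2 / s := fun i j hij hi hj => by
    rw [hM, if_neg hij, if_neg (not_or.mpr ⟨hi, hj⟩), Real.norm_eq_abs, abs_div, abs_neg,
      abs_of_pos hs, abs_of_nonneg (sq_nonneg τ)]
  refine hsymm.posDef_of_sum_norm_offDiag_lt fun k => ?_
  rw [hM, if_pos rfl, RCLike.re_to_real]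
  by_cases hk : k = 0
  · subst hk
    rw [sum_univ_erase_eq_of_eq_const 0 fun j hj => hborder 0 j hj.symm (.inl rfl),
      Fintype.card_fin]
    linarith [show (1 + ((p : ℝ) - 1) * τ * |ε|) / s = 1 / s + ((p : ℝ) - 1) * (τ * |ε| / s) by
      ring]
  · rw [sum_univ_erase_eq_add_of_eq_const hk fun j hjk hj => hinner k j hjk.symm hk hj,
      hborder k 0 hk (.inr rfl), Fintype.card_fin]
    linarith [hσi k hk, show (1 + ((p : ℝ) - 2) * τ ^ 2 + τ * |ε|) / s
      = 1 / s + (τ * |ε| / s + ((p : ℝ) - 2) * (τ ^ 2 / s)) by ring]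

/-- The nontrivial diagonal block of the congruence-transformed proximal matrix is
positive definite on the parameter region 𝒦. -/
theorem transformed_block_posDef
    (p : ℕ) [NeZero p] (hp : 2 ≤ p)
    (ε τ s : ℝ) (hτ : 0 < τ) (hs : 0 < s)
    (σ : Fin p → ℝ)
    (hσ1 : σ 0 > (1 + ((p : ℝ) - 1) * τ * |ε|) / s)
    (hσi : ∀ i : Fin p, i ≠ 0 → σ i > (1 + ((p : ℝ) - 2) * τ ^ 2 + τ * |ε|) / s)
    (M : Matrix (Fin p) (Fin p) ℝ)
    (hM : ∀ i j, M i j =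
      if i = j then σ i - 1 / s
      else if i = 0 ∨ j = 0 then -(τ * ε) / s
      else -(τ ^ 2) / s) :
    M.PosDef :=
  transformed_block_posDef_general p ε τ s hτ hs σ hσ1 hσi M hM
end

section
/- Let H be a real inner product space and G : H → H a self-adjoint positive semidefinite linear map; write ‖z‖²_G := ⟨z, Gz⟩. Let γ ∈ (0,2), let w, w̃, w* ∈ H, set w⁺ = w + γ(w̃ − w), and suppose ⟨w̃ − w*, G(w − w̃)⟩ ≥ 0. Then ‖w⁺ − w*‖²_G ≤ ‖w − w*‖²_G − ((2 − γ)/γ)‖w − w⁺‖²_G. -/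
open scoped RealInnerProductSpace

/-- Contraction inequality for one relaxed proximal point step with relaxation
factor `γ ∈ (0, 2)` under the `G`-norm. -/
theorem relaxed_step_contraction
    (H : Type*) [NormedAddCommGroup H] [InnerProductSpace ℝ H]
    (G : H →ₗ[ℝ] H)
    (hsa : ∀ u v : H, ⟪G u, v⟫ = ⟪u, G v⟫)
    (hpsd : ∀ z : H, 0 ≤ ⟪z, G z⟫)
    (γ : ℝ) (hγ₀ : 0 < γ) (hγ₂ : γ < 2)
    (w wt ws wplus : H)
    (hplus : wplus = w + γ • (wt - w))
    (hineq : 0 ≤ ⟪wt - ws, G (w - wt)⟫) :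
    ⟪wplus - ws, G (wplus - ws)⟫
      ≤ ⟪w - ws, G (w - ws)⟫ - ((2 - γ) / γ) * ⟪w - wplus, G (w - wplus)⟫ := by
  set a := w - ws with ha
  set d := wt - w with hd
  have h1 : wplus - ws = a + γ • d := by rw [hplus, ha, hd]; abel
  have h2 : w - wplus = -(γ • d) := by rw [hplus]; abel
  have hsym : ⟪a, G d⟫ = ⟪d, G a⟫ := by
    rw [← hsa, real_inner_comm]
  have hkey : ⟪d, G a⟫ + ⟪d, G d⟫ ≤ 0 := by
    have e1 : w - wt = -d := by rw [hd]; abel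
    have e2 : wt - ws = a + d := by rw [ha, hd]; abel
    have := hineq
    rw [e1, e2, map_neg, inner_neg_right, inner_add_left, hsym] at this
    linarith
  have hdd := hpsd d
  rw [h1, h2, map_add, map_smul, map_neg, map_smul, inner_neg_neg,
    real_inner_smul_left, real_inner_smul_right, inner_add_left, inner_add_right,
    inner_add_right, real_inner_smul_left, real_inner_smul_left,
    real_inner_smul_right, real_inner_smul_right, hsym]
  have h3 : (2 - γ) / γ * (γ * (γ * ⟪d, G d⟫)) = (2 - γ) * γ * ⟪d, G d⟫ := by
    field_simp
  rw [h3]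
  nlinarith [mul_le_mul_of_nonneg_left hkey (le_of_lt hγ₀)]
end

section
/- Let H be a real inner product space, Ω ⊆ H, φ : H → ℝ, G : H → H a linear map, and J : H → H a mapping satisfying ⟨a − b, J(a) − J(b)⟩ = 0 for all a, b ∈ H. Let v ∈ H, and suppose w̃ ∈ Ω satisfies the proximal-point inequality: φ(w) − φ(w̃) + ⟨w − w̃, J(w̃) + G(w̃ − v)⟩ ≥ 0 for all w ∈ Ω. Suppose w* ∈ Ω solves the variational inequality: φ(w) − φ(w*) + ⟨w − w*, J(w*)⟩ ≥ 0 for all w ∈ Ω. Then ⟨w̃ − w*, G(v − w̃)⟩ ≥ 0. -/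
open scoped RealInnerProductSpace

/-- If `w̃` is the output of one exact PPA step (with proximal map `G`) from the point `v`,
`J` is skew, and `w*` solves the variational inequality, then `⟨w̃ − w*, G(v − w̃)⟩ ≥ 0`. -/
theorem ppa_step_vs_solution
    (H : Type*) [NormedAddCommGroup H] [InnerProductSpace ℝ H]
    (Ω : Set H) (φ : H → ℝ) (G : H →ₗ[ℝ] H) (J : H → H)
    (hskew : ∀ a b : H, ⟪a - b, J a - J b⟫ = 0)
    (v : H) (wt : H) (hwt : wt ∈ Ω)
    (hppa : ∀ w ∈ Ω, 0 ≤ φ w - φ wt + ⟪w - wt, J wt + G (wt - v)⟫)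
    (ws : H) (hws : ws ∈ Ω)
    (hvi : ∀ w ∈ Ω, 0 ≤ φ w - φ ws + ⟪w - ws, J ws⟫) :
    0 ≤ ⟪wt - ws, G (v - wt)⟫ := by
  have h1 := hppa ws hws
  have h2 := hvi wt hwt
  have e1 : ⟪ws - wt, J wt + G (wt - v)⟫ = ⟪ws - wt, J wt⟫ + ⟪ws - wt, G (wt - v)⟫ :=
    inner_add_right _ _ _
  have e2 : ⟪ws - wt, J ws⟫ - ⟪ws - wt, J wt⟫ = 0 := by
    rw [← inner_sub_right]; exact hskew ws wt
  have e3 : ⟪wt - ws, J ws⟫ = -⟪ws - wt, J ws⟫ := by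
    rw [← inner_neg_left, neg_sub]
  have e4 : ⟪wt - ws, G (v - wt)⟫ = ⟪ws - wt, G (wt - v)⟫ := by
    rw [show wt - ws = -(ws - wt) by abel, show v - wt = -(wt - v) by abel, map_neg,
      inner_neg_neg]
  linarith
end

section
/- Let H be a real inner product space, G : H → H a self-adjoint positive semidefinite linear map with ‖z‖²_G := ⟨z, Gz⟩, γ ∈ (0,2), and w^k, w̃ ∈ H with w^{k+1} = w^k + γ(w̃ − w^k). Let φ : H → ℝ, let w ∈ H and g ∈ H, and suppose φ(w) − φ(w̃) + ⟨w − w̃, g⟩ ≥ ⟨w̃ − w, G(w̃ − w^k)⟩. Then φ(w) − φ(w̃) + ⟨w − w̃, g⟩ + (1/(2γ))‖w^k − w‖²_G ≥ (1/(2γ))‖w^{k+1} − w‖²_G. -/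
open scoped RealInnerProductSpace

/-- One-step inequality of the relaxed PPA: if
`φ(w) − φ(w̃) + ⟨w − w̃, g⟩ ≥ ⟨w̃ − w, G(w̃ − wᵏ)⟩` and `wᵏ⁺¹ = wᵏ + γ(w̃ − wᵏ)`, then
`φ(w) − φ(w̃) + ⟨w − w̃, g⟩ + (1/2γ)‖wᵏ − w‖²_G ≥ (1/2γ)‖wᵏ⁺¹ − w‖²_G`. -/
theorem one_step_rate_inequality
    (H : Type*) [NormedAddCommGroup H] [InnerProductSpace ℝ H]
    (G : H →ₗ[ℝ] H)
    (hsa : ∀ u v : H, ⟪G u, v⟫ = ⟪u, G v⟫)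
    (hpsd : ∀ z : H, 0 ≤ ⟪z, G z⟫)
    (γ : ℝ) (hγ₀ : 0 < γ) (hγ₂ : γ < 2)
    (wk wt wk1 : H) (hrelax : wk1 = wk + γ • (wt - wk))
    (φ : H → ℝ) (w g : H)
    (hstep : φ w - φ wt + ⟪w - wt, g⟫ ≥ ⟪wt - w, G (wt - wk)⟫) :
    φ w - φ wt + ⟪w - wt, g⟫ + (1 / (2 * γ)) * ⟪wk - w, G (wk - w)⟫
      ≥ (1 / (2 * γ)) * ⟪wk1 - w, G (wk1 - w)⟫ := by
  set a := wk - w with ha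
  set d := wt - wk with hd
  have h1 : wk1 - w = a + γ • d := by rw [hrelax, ha, hd]; abel
  have hsym : ⟪d, G a⟫ = ⟪a, G d⟫ := by
    rw [← hsa a d, real_inner_comm]
  have hexp : ⟪wk1 - w, G (wk1 - w)⟫
      = ⟪a, G a⟫ + 2 * γ * ⟪a, G d⟫ + γ ^ 2 * ⟪d, G d⟫ := by
    rw [h1]
    simp only [map_add, map_smul, inner_add_left, inner_add_right,
      inner_smul_left, inner_smul_right, RCLike.conj_to_real]
    rw [hsym]; ring
  have h2 : ⟪wt - w, G (wt - wk)⟫ = ⟪a, G d⟫ + ⟪d, G d⟫ := by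
    have : wt - w = a + d := by rw [ha, hd]; abel
    rw [this, inner_add_left]
  have hdd : 0 ≤ ⟪d, G d⟫ := hpsd d
  rw [hexp]
  rw [h2] at hstep
  have hne : γ ≠ 0 := ne_of_gt hγ₀
  have expand : 1 / (2 * γ) * (⟪a, G a⟫ + 2 * γ * ⟪a, G d⟫ + γ ^ 2 * ⟪d, G d⟫)
      = 1 / (2 * γ) * ⟪a, G a⟫ + ⟪a, G d⟫ + (γ / 2) * ⟪d, G d⟫ := by
    field_simp
  rw [expand]
  nlinarith [mul_le_mul_of_nonneg_right hγ₂.le hdd]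
end

section
/- Let H be a real inner product space, Ω ⊆ H a convex set, G : H → H a self-adjoint positive semidefinite linear map with ‖z‖²_G := ⟨z, Gz⟩, γ ∈ (0,2), and φ : H → ℝ a convex function. Let (w^k)_{k≥0} and (w̃^k)_{k≥0} be sequences in H with w̃^k ∈ Ω and w^{k+1} = w^k + γ(w̃^k − w^k) for all k, and let J : H → H. Suppose that for every k ≥ 0 and every w ∈ Ω, φ(w) − φ(w̃^k) + ⟨w − w̃^k, J(w)⟩ ≥ ⟨w̃^k − w, G(w̃^k − w^k)⟩. Then for every t ≥ 0, the ergodic average 𝐰_t := (1/(1+t)) Σ_{k=0}^{t} w̃^k satisfies, for all w ∈ Ω, φ(𝐰_t) − φ(w) + ⟨𝐰_t − w, J(w)⟩ ≤ ‖w^0 − w‖²_G / (2γ(1+t)). -/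
open scoped RealInnerProductSpace

private lemma expand_aux {H : Type*} [NormedAddCommGroup H] [InnerProductSpace ℝ H]
    (G : H →ₗ[ℝ] H) (hsym : ∀ a b : H, ⟪a, G b⟫ = ⟪b, G a⟫) (x d : H) (c : ℝ) :
    ⟪x - c • d, G (x - c • d)⟫ = ⟪x, G x⟫ - 2*c*⟪x, G d⟫ + c^2*⟪d, G d⟫ := by
  simp only [inner_sub_left, inner_sub_right, map_sub, map_smul,
    real_inner_smul_left, real_inner_smul_right]
  rw [hsym d x]; ring

/-- Worst-case `O(1/t)` ergodic convergence rate of the relaxed parameterized PPA. -/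
theorem ergodic_convergence_rate
    (H : Type*) [NormedAddCommGroup H] [InnerProductSpace ℝ H]
    (Ω : Set H) (hΩ : Convex ℝ Ω)
    (G : H →ₗ[ℝ] H)
    (hsa : ∀ u v : H, ⟪G u, v⟫ = ⟪u, G v⟫)
    (hpsd : ∀ z : H, 0 ≤ ⟪z, G z⟫)
    (γ : ℝ) (hγ₀ : 0 < γ) (hγ₂ : γ < 2)
    (φ : H → ℝ) (hφ : ConvexOn ℝ Set.univ φ)
    (w wt : ℕ → H) (hmem : ∀ k, wt k ∈ Ω)
    (hrelax : ∀ k, w (k + 1) = w k + γ • (wt k - w k))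
    (J : H → H)
    (hstep : ∀ k : ℕ, ∀ v ∈ Ω,
      φ v - φ (wt k) + ⟪v - wt k, J v⟫ ≥ ⟪wt k - v, G (wt k - w k)⟫) :
    ∀ t : ℕ, ∀ v ∈ Ω,
      φ ((1 / (1 + (t : ℝ))) • ∑ k ∈ Finset.range (t + 1), wt k) - φ v
        + ⟪((1 / (1 + (t : ℝ))) • ∑ k ∈ Finset.range (t + 1), wt k) - v, J v⟫
      ≤ ⟪w 0 - v, G (w 0 - v)⟫ / (2 * γ * (1 + (t : ℝ))) := by
  intro t v hv
  have hsym : ∀ a b : H, ⟪a, G b⟫ = ⟪b, G a⟫ := fun a b => by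
    rw [← hsa, real_inner_comm]
  set Q : ℕ → ℝ := fun k => ⟪w k - v, G (w k - v)⟫ with hQdef
  have ht : (0:ℝ) < 1 + (t:ℝ) := by positivity
  have h2γ : (0:ℝ) < 2 * γ := by linarith
  -- per-step bound
  have key : ∀ k : ℕ, φ (wt k) - φ v + ⟪wt k - v, J v⟫ ≤ (Q k - Q (k+1)) / (2*γ) := by
    intro k
    have hs := hstep k v hv
    have hd := hpsd (w k - wt k)
    have e1 : wt k - v = (w k - v) - (w k - wt k) := by abel
    have e2 : wt k - w k = -(w k - wt k) := by abel
    have e3 : v - wt k = (w k - wt k) - (w k - v) := by abel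
    rw [ge_iff_le, e3, e1, e2] at hs
    have hA : ⟪(w k - v) - (w k - wt k), G (-(w k - wt k))⟫
        = -⟪w k - v, G (w k - wt k)⟫ + ⟪w k - wt k, G (w k - wt k)⟫ := by
      rw [map_neg, inner_neg_right, inner_sub_left]; ring
    have hJ : ⟪(w k - wt k) - (w k - v), J v⟫ = -⟪wt k - v, J v⟫ := by
      rw [show (w k - wt k) - (w k - v) = -(wt k - v) by abel, inner_neg_left]
    rw [hA, hJ] at hs
    have hQ1 : Q (k+1) = Q k - 2*γ*⟪w k - v, G (w k - wt k)⟫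
        + γ^2*⟪w k - wt k, G (w k - wt k)⟫ := by
      show ⟪w (k+1) - v, G (w (k+1) - v)⟫ = _
      rw [show w (k+1) - v = (w k - v) - γ • (w k - wt k) by
        rw [hrelax k, smul_sub, smul_sub]; abel]
      exact expand_aux G hsym _ _ _
    rw [hQ1, le_div_iff₀ h2γ]
    nlinarith [mul_le_mul_of_nonneg_left hs h2γ.le,
      mul_nonneg (mul_nonneg hγ₀.le (by linarith : (0:ℝ) ≤ 2 - γ)) hd]
  -- summed bound
  have hsum : ∑ k ∈ Finset.range (t+1), (φ (wt k) - φ v + ⟪wt k - v, J v⟫)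
      ≤ Q 0 / (2*γ) := by
    calc ∑ k ∈ Finset.range (t+1), (φ (wt k) - φ v + ⟪wt k - v, J v⟫)
        ≤ ∑ k ∈ Finset.range (t+1), (Q k - Q (k+1)) / (2*γ) :=
          Finset.sum_le_sum fun k _ => key k
      _ = (Q 0 - Q (t+1)) / (2*γ) := by
          rw [← Finset.sum_div, Finset.sum_range_sub' Q]
      _ ≤ Q 0 / (2*γ) := by
          have hQp : 0 ≤ Q (t+1) := hpsd (w (t+1) - v)
          gcongr
          linarith
  set μ : ℝ := 1 / (1 + (t:ℝ)) with hμdef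
  have hμ0 : 0 ≤ μ := by positivity
  have hcard : ((t:ℝ) + 1) * μ = 1 := by rw [hμdef]; field_simp; ring
  have hμsum : ∑ _k ∈ Finset.range (t+1), μ = 1 := by
    rw [Finset.sum_const, Finset.card_range, nsmul_eq_mul]
    push_cast; linarith [hcard]
  -- Jensen
  have hjensen : φ (μ • ∑ k ∈ Finset.range (t+1), wt k)
      ≤ ∑ k ∈ Finset.range (t+1), μ * φ (wt k) := by
    have := hφ.map_sum_le (t := Finset.range (t+1)) (w := fun _ => μ)
      (p := fun k => wt k) (fun _ _ => hμ0) hμsum (fun i _ => Set.mem_univ _)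
    rw [Finset.smul_sum]
    exact this
  -- inner product decomposition
  have hshift : (μ • ∑ k ∈ Finset.range (t+1), wt k) - v
      = ∑ k ∈ Finset.range (t+1), μ • (wt k - v) := by
    simp only [smul_sub, Finset.sum_sub_distrib, Finset.sum_const, Finset.card_range]
    rw [Finset.smul_sum]
    congr 1
    rw [← Nat.cast_smul_eq_nsmul ℝ, smul_smul]
    push_cast
    rw [hcard, one_smul]
  have hinner : ⟪(μ • ∑ k ∈ Finset.range (t+1), wt k) - v, J v⟫
      = ∑ k ∈ Finset.range (t+1), μ * ⟪wt k - v, J v⟫ := by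
    rw [hshift, sum_inner]
    simp [real_inner_smul_left]
  have hfv : ∑ _k ∈ Finset.range (t+1), μ * φ v = φ v := by
    rw [← Finset.sum_mul, hμsum, one_mul]
  have h1 : μ * (∑ k ∈ Finset.range (t+1), (φ (wt k) - φ v + ⟪wt k - v, J v⟫))
      ≤ μ * (Q 0 / (2*γ)) := mul_le_mul_of_nonneg_left hsum hμ0
  have h2 : μ * (∑ k ∈ Finset.range (t+1), (φ (wt k) - φ v + ⟪wt k - v, J v⟫))
      = (∑ k ∈ Finset.range (t+1), μ * φ (wt k)) - φ v
        + ∑ k ∈ Finset.range (t+1), μ * ⟪wt k - v, J v⟫ := by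
    rw [Finset.mul_sum]
    simp only [mul_sub, mul_add]
    rw [Finset.sum_add_distrib, Finset.sum_sub_distrib, hfv]
  have h3 : μ * (Q 0 / (2*γ)) = Q 0 / (2 * γ * (1 + (t:ℝ))) := by
    rw [hμdef, div_mul_div_comm, one_mul, mul_comm (1 + (t:ℝ)) (2*γ)]
  have hq0 : Q 0 = ⟪w 0 - v, G (w 0 - v)⟫ := rfl
  rw [hinner]
  linarith [hjensen, h1, h2, h3]
end

section
/- Let n ≥ 1, σ > 0, let U ∈ ℝ^{n×n} be an orthogonal matrix, ρ ∈ ℝ^n, and set B = U·Diag(ρ)·Uᵀ. Define γ_i = (−ρ_i + √(ρ_i² + 4σ)) / (2σ) for i = 1,…,n and X = U·Diag(γ)·Uᵀ. Then X is symmetric positive definite and satisfies the quadratic matrix equation σX² + BX = I; equivalently, for B = C − σM, C − X⁻¹ + σ(X − M) = 0. -/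
open Matrix

/-- Closed-form solution of the quadratic matrix equation `σX² + BX = I` arising as the
first-order optimality condition of the `X`-subproblem: with `B = U·Diag(ρ)·Uᵀ` and
`γᵢ = (−ρᵢ + √(ρᵢ² + 4σ))/(2σ)`, the matrix `X = U·Diag(γ)·Uᵀ` is symmetric positive
definite, satisfies `σX² + BX = I`, and for any `C`, `M` with `B = C − σM` one has
`C − X⁻¹ + σ(X − M) = 0`. -/
theorem X_subproblem_matrix_equation
    (n : ℕ) (hn : 1 ≤ n) (σ : ℝ) (hσ : 0 < σ)
    (U : Matrix (Fin n) (Fin n) ℝ) (hU : Uᵀ * U = 1)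
    (ρ : Fin n → ℝ)
    (B : Matrix (Fin n) (Fin n) ℝ) (hB : B = U * Matrix.diagonal ρ * Uᵀ)
    (X : Matrix (Fin n) (Fin n) ℝ)
    (hX : X = U * Matrix.diagonal
        (fun i => (-ρ i + Real.sqrt ((ρ i) ^ 2 + 4 * σ)) / (2 * σ)) * Uᵀ) :
    X.PosDef ∧ σ • (X * X) + B * X = 1
    ∧ ∀ C M : Matrix (Fin n) (Fin n) ℝ, B = C - σ • M →
        C - X⁻¹ + σ • (X - M) = 0 := by
  set γ : Fin n → ℝ := fun i => (-ρ i + Real.sqrt ((ρ i) ^ 2 + 4 * σ)) / (2 * σ) with hγ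
  have hUUt : U * Uᵀ = 1 := mul_eq_one_comm.mp hU
  have hsq : ∀ i, Real.sqrt ((ρ i) ^ 2 + 4 * σ) ^ 2 = (ρ i) ^ 2 + 4 * σ := fun i =>
    Real.sq_sqrt (by positivity)
  have hγpos : ∀ i, 0 < γ i := by
    intro i
    have h1 : |ρ i| < Real.sqrt ((ρ i) ^ 2 + 4 * σ) := by
      rw [← Real.sqrt_sq_eq_abs]
      exact Real.sqrt_lt_sqrt (by positivity) (by linarith)
    have : ρ i < Real.sqrt ((ρ i) ^ 2 + 4 * σ) := lt_of_le_of_lt (le_abs_self _) h1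
    have : 0 < -ρ i + Real.sqrt ((ρ i) ^ 2 + 4 * σ) := by linarith
    exact div_pos this (by linarith)
  have hquad : ∀ i, σ * (γ i * γ i) + ρ i * γ i = 1 := by
    intro i
    have h2σ : (2 * σ) ≠ 0 := by positivity
    have := hsq i
    simp only [hγ]
    field_simp
    rw [mul_comm σ 4]
    nlinarith [hsq i]
  -- Positive definiteness
  have hDpos : (Matrix.diagonal γ).PosDef := Matrix.PosDef.diagonal hγpos
  have hXpd : X.PosDef := by
    refine Matrix.posDef_iff_dotProduct_mulVec.mpr ⟨?_, ?_⟩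
    · rw [hX]
      show (U * Matrix.diagonal γ * Uᵀ)ᴴ = _
      simp [Matrix.conjTranspose_mul, Matrix.mul_assoc,
        Matrix.conjTranspose_eq_transpose_of_trivial, Matrix.diagonal_transpose]
    · intro x hx
      have hy : Uᵀ *ᵥ x ≠ 0 := by
        intro h
        apply hx
        have : U *ᵥ (Uᵀ *ᵥ x) = 0 := by rw [h, Matrix.mulVec_zero]
        rwa [Matrix.mulVec_mulVec, hUUt, Matrix.one_mulVec] at this
      have h2 := hDpos.dotProduct_mulVec_pos hy
      have hform : star x ⬝ᵥ X *ᵥ x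
          = star (Uᵀ *ᵥ x) ⬝ᵥ Matrix.diagonal γ *ᵥ (Uᵀ *ᵥ x) := by
        rw [hX]
        simp only [star_trivial]
        rw [← Matrix.mulVec_mulVec, ← Matrix.mulVec_mulVec,
          Matrix.dotProduct_mulVec x U, ← Matrix.mulVec_transpose]
      rw [hform]
      exact h2
  -- The matrix equation
  have key : σ • (X * X) + B * X = 1 := by
    rw [hX, hB]
    have hcancel : ∀ Y : Matrix (Fin n) (Fin n) ℝ, Uᵀ * (U * Y) = Y := fun Y => by
      rw [← Matrix.mul_assoc, hU, Matrix.one_mul]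
    have h1 : (U * Matrix.diagonal γ * Uᵀ) * (U * Matrix.diagonal γ * Uᵀ)
        = U * (Matrix.diagonal γ * Matrix.diagonal γ) * Uᵀ := by
      simp only [Matrix.mul_assoc, hcancel]
    have h2 : (U * Matrix.diagonal ρ * Uᵀ) * (U * Matrix.diagonal γ * Uᵀ)
        = U * (Matrix.diagonal ρ * Matrix.diagonal γ) * Uᵀ := by
      simp only [Matrix.mul_assoc, hcancel]
    have h3 : U * Matrix.diagonal (σ • fun i => γ i * γ i) * Uᵀ
        = σ • (U * Matrix.diagonal (fun i => γ i * γ i) * Uᵀ) := by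
      rw [Matrix.diagonal_smul, Matrix.mul_smul, Matrix.smul_mul]
    rw [h1, h2, Matrix.diagonal_mul_diagonal, Matrix.diagonal_mul_diagonal,
      ← h3, ← Matrix.add_mul, ← Matrix.mul_add]
    have hone : (Matrix.diagonal (σ • fun i => γ i * γ i)
        + Matrix.diagonal fun i => ρ i * γ i) = (1 : Matrix (Fin n) (Fin n) ℝ) := by
      ext i j
      rcases eq_or_ne i j with h | h
      · subst h
        simp only [Matrix.add_apply, Matrix.diagonal_apply_eq, Pi.smul_apply,
          smul_eq_mul, Matrix.one_apply_eq]
        exact hquad i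
      · simp [Matrix.diagonal_apply_ne _ h, Matrix.one_apply_ne h]
    rw [hone, Matrix.mul_one, hUUt]
  refine ⟨hXpd, key, ?_⟩
  intro C M hCM
  have hinv : X⁻¹ = σ • X + B := by
    have : (σ • X + B) * X = 1 := by
      rw [Matrix.add_mul, Matrix.smul_mul]; exact key
    exact Matrix.inv_eq_left_inv this
  rw [hinv, hCM]
  rw [smul_sub]
  abel
end

section
/- Let n ≥ 1, σ > 0, let C, M ∈ ℝ^{n×n} be symmetric, and let U ∈ ℝ^{n×n} be orthogonal and ρ ∈ ℝ^n with C − σM = U·Diag(ρ)·Uᵀ. Define γ_i = (−ρ_i + √(ρ_i² + 4σ))/(2σ) and X* = U·Diag(γ)·Uᵀ. Then X* is symmetric positive definite and minimizes f(X) = ⟨X, C⟩ − log det(X) + (σ/2)‖X − M‖_F² over all symmetric positive definite matrices X; that is, f(X*) ≤ f(X) for every symmetric positive definite X ∈ ℝ^{n×n}. -/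
open Matrix
open scoped MatrixOrder

/-!
The map `X ↦ ⟨X, C⟩ + (σ/2)‖X − M‖²_F` is exactly its second-order Taylor expansion at `X*`,
with gradient `C + σ(X* − M)`, while `log det` is concave with gradient `A⁻¹` at `A`: applying
`log t ≤ t − 1` to the eigenvalues of `A^{-1/2} X A^{-1/2}` gives
`log det X ≤ log det A + tr((X − A)A⁻¹)`. Since each `γᵢ` solves `σγ² + ρᵢγ = 1`, the two
gradients coincide at `X*`, i.e. `X*⁻¹ = C + σ(X* − M)`, so `f(X) − f(X*) ≥ (σ/2)‖X − X*‖²_F`.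
-/

noncomputable def posRoot (σ r : ℝ) : ℝ := (-r + √(r ^ 2 + 4 * σ)) / (2 * σ)

lemma posRoot_pos {σ : ℝ} (hσ : 0 < σ) (r : ℝ) : 0 < posRoot σ r := by
  have hr : |r| < √(r ^ 2 + 4 * σ) :=
    (Real.lt_sqrt (abs_nonneg r)).2 (by rw [sq_abs]; linarith)
  unfold posRoot
  have := le_abs_self r
  apply div_pos <;> linarith

lemma inv_posRoot {σ : ℝ} (hσ : 0 < σ) (r : ℝ) : (posRoot σ r)⁻¹ = σ * posRoot σ r + r := by
  refine (eq_inv_of_mul_eq_one_left ?_).symm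
  have hs : √(r ^ 2 + 4 * σ) ^ 2 = r ^ 2 + 4 * σ := Real.sq_sqrt (by positivity)
  unfold posRoot
  generalize √(r ^ 2 + 4 * σ) = s at hs ⊢
  field_simp
  linear_combination hs

namespace Matrix

section Frobenius

variable {m n R : Type*} [Fintype m] [Fintype n] [CommSemiring R]

lemma sum_sum_mul_eq_trace_mul_transpose (A B : Matrix m n R) :
    ∑ i, ∑ j, A i j * B i j = (A * Bᵀ).trace := by
  simp [trace, mul_apply]

lemma frobenius_quadratic_taylor (σ : ℝ) (C M X Y : Matrix m n ℝ) :
    (∑ i, ∑ j, X i j * C i j) + σ / 2 * ∑ i, ∑ j, (X i j - M i j) ^ 2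
      = (∑ i, ∑ j, Y i j * C i j) + σ / 2 * ∑ i, ∑ j, (Y i j - M i j) ^ 2
        + ∑ i, ∑ j, (X - Y) i j * (C + σ • (Y - M)) i j
        + σ / 2 * ∑ i, ∑ j, (X i j - Y i j) ^ 2 := by
  simp only [sub_apply, add_apply, smul_apply, smul_eq_mul, Finset.mul_sum,
    ← Finset.sum_add_distrib]
  refine Finset.sum_congr rfl fun i _ => Finset.sum_congr rfl fun j _ => ?_
  ring

end Frobenius

section Orthogonal

variable {n K : Type*} [Fintype n] [DecidableEq n] [Field K] {U : Matrix n n K}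

lemma conj_diagonal_mul_conj_diagonal (hU : Uᵀ * U = 1) (a b : n → K) :
    U * diagonal a * Uᵀ * (U * diagonal b * Uᵀ) = U * diagonal (a * b) * Uᵀ := by
  simp only [Matrix.mul_assoc, ← Matrix.mul_assoc Uᵀ, hU, Matrix.one_mul]
  rw [← Matrix.mul_assoc (diagonal a), diagonal_mul_diagonal]
  rfl

lemma inv_conj_diagonal (hU : Uᵀ * U = 1) {a : n → K} (ha : ∀ i, a i ≠ 0) :
    (U * diagonal a * Uᵀ)⁻¹ = U * diagonal a⁻¹ * Uᵀ := by
  refine inv_eq_right_inv ?_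
  have : a * a⁻¹ = fun _ => 1 := funext fun i => mul_inv_cancel₀ (ha i)
  rw [conj_diagonal_mul_conj_diagonal hU, this, diagonal_one, Matrix.mul_one,
    mul_eq_one_comm.mp hU]

end Orthogonal

section PosDef

variable {n : Type*} [Fintype n] [DecidableEq n]

lemma posDef_conj_diagonal {U : Matrix n n ℝ} (hU : Uᵀ * U = 1) {a : n → ℝ} (ha : ∀ i, 0 < a i) :
    (U * diagonal a * Uᵀ).PosDef := by
  have hUunit : IsUnit U := (isUnit_iff_isUnit_det U).2 (isUnit_det_of_left_inverse hU)
  have := (IsUnit.posDef_star_right_conjugate_iff hUunit).2 (PosDef.diagonal ha)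
  rwa [star_eq_conjTranspose, conjTranspose_eq_transpose_of_trivial] at this

lemma PosDef.log_det_le_trace_sub_card {P : Matrix n n ℝ} (hP : P.PosDef) :
    Real.log P.det ≤ P.trace - Fintype.card n := by
  have hH := hP.isHermitian
  rw [hH.det_eq_prod_eigenvalues, hH.trace_eq_sum_eigenvalues]
  simp only [RCLike.ofReal_real_eq_id, id]
  rw [Real.log_prod fun i _ => (hP.eigenvalues_pos i).ne']
  calc ∑ i, Real.log (hH.eigenvalues i) ≤ ∑ i, (hH.eigenvalues i - 1) :=
        Finset.sum_le_sum fun i _ => Real.log_le_sub_one_of_pos (hP.eigenvalues_pos i)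
    _ = _ := by simp [Finset.sum_sub_distrib]

lemma PosDef.log_det_le_log_det_add_trace {A X : Matrix n n ℝ} (hA : A.PosDef) (hX : X.PosDef) :
    Real.log X.det ≤ Real.log A.det + ((X - A) * A⁻¹).trace := by
  set S := CFC.sqrt A⁻¹
  have hSS : S * S = A⁻¹ := CFC.sqrt_mul_sqrt_self _ hA.inv.posSemidef.nonneg
  have hSH : Sᴴ = S := (CFC.sqrt_nonneg _).posSemidef.isHermitian
  have hS : IsUnit S := isUnit_of_mul_isUnit_left (hSS ▸ hA.inv.isUnit)
  have hP : (S * X * Sᴴ).PosDef := (IsUnit.posDef_star_right_conjugate_iff hS).2 hX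
  have hdet : (S * X * Sᴴ).det = X.det * A.det⁻¹ := by
    rw [hSH, det_mul, det_mul, mul_right_comm, ← det_mul, hSS, det_nonsing_inv,
      Ring.inverse_eq_inv', mul_comm]
  have htr : (S * X * Sᴴ).trace = (X * A⁻¹).trace := by
    rw [hSH, trace_mul_cycle, hSS, trace_mul_comm]
  have key := hP.log_det_le_trace_sub_card
  rw [hdet, Real.log_mul hX.det_pos.ne' (inv_pos.2 hA.det_pos).ne', Real.log_inv, htr] at key
  rw [Matrix.sub_mul, mul_nonsing_inv _ hA.det_pos.ne'.isUnit, trace_sub, trace_one]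
  linarith

end PosDef

end Matrix

theorem X_subproblem_minimizer_general
    (n : ℕ) (σ : ℝ) (hσ : 0 < σ)
    (C M : Matrix (Fin n) (Fin n) ℝ)
    (U : Matrix (Fin n) (Fin n) ℝ) (hU : Uᵀ * U = 1)
    (ρ : Fin n → ℝ)
    (hdecomp : C - σ • M = U * Matrix.diagonal ρ * Uᵀ)
    (Xs : Matrix (Fin n) (Fin n) ℝ)
    (hXs : Xs = U * Matrix.diagonal
        (fun i => (-ρ i + Real.sqrt ((ρ i) ^ 2 + 4 * σ)) / (2 * σ)) * Uᵀ) :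
    Xs.PosDef ∧
      ∀ X : Matrix (Fin n) (Fin n) ℝ, X.PosDef →
        (∑ i, ∑ j, Xs i j * C i j) - Real.log Xs.det
            + (σ / 2) * ∑ i, ∑ j, (Xs i j - M i j) ^ 2
          ≤ (∑ i, ∑ j, X i j * C i j) - Real.log X.det
            + (σ / 2) * ∑ i, ∑ j, (X i j - M i j) ^ 2 := by
  set γ : Fin n → ℝ := fun i => posRoot σ (ρ i)
  replace hXs : Xs = U * diagonal γ * Uᵀ := hXs
  have hγ : ∀ i, 0 < γ i := fun i => posRoot_pos hσ (ρ i)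
  have hXsPD : Xs.PosDef := hXs ▸ posDef_conj_diagonal hU hγ
  refine ⟨hXsPD, fun X hX => ?_⟩
  have hgrad : Xs⁻¹ = C + σ • (Xs - M) := by
    have hγinv : γ⁻¹ = σ • γ + ρ := funext fun i => inv_posRoot hσ (ρ i)
    have hdiag : diagonal (σ • γ + ρ) = σ • diagonal γ + diagonal ρ := by
      rw [← diagonal_smul, diagonal_add]; rfl
    rw [hXs, inv_conj_diagonal hU fun i => (hγ i).ne', hγinv, hdiag, Matrix.mul_add,
      Matrix.add_mul, ← hdecomp, mul_smul_comm, smul_mul_assoc]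
    module
  have hinner : ((X - Xs) * Xs⁻¹).trace = ∑ i, ∑ j, (X - Xs) i j * Xs⁻¹ i j := by
    rw [sum_sum_mul_eq_trace_mul_transpose, transpose_nonsing_inv,
      (isHermitian_iff_isSymm.1 hXsPD.isHermitian).eq]
  have hconcave := hXsPD.log_det_le_log_det_add_trace hX
  have htaylor := frobenius_quadratic_taylor σ C M X Xs
  rw [← hgrad, ← hinner] at htaylor
  have hsq : 0 ≤ σ / 2 * ∑ i, ∑ j, (X i j - Xs i j) ^ 2 := by positivity
  linarith

/-- Closed-form solution of the `X`-subproblem of the GR-PPA applied to the latent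
variable Gaussian graphical model selection problem: with `C − σM = U·Diag(ρ)·Uᵀ` and
`γᵢ = (−ρᵢ + √(ρᵢ² + 4σ))/(2σ)`, the matrix `X* = U·Diag(γ)·Uᵀ` is symmetric positive
definite and minimizes `⟨X, C⟩ − log det X + (σ/2)‖X − M‖_F²` over symmetric positive
definite matrices. -/
theorem X_subproblem_minimizer
    (n : ℕ) (hn : 1 ≤ n) (σ : ℝ) (hσ : 0 < σ)
    (C M : Matrix (Fin n) (Fin n) ℝ) (hC : C.IsSymm) (hM : M.IsSymm)
    (U : Matrix (Fin n) (Fin n) ℝ) (hU : Uᵀ * U = 1)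
    (ρ : Fin n → ℝ)
    (hdecomp : C - σ • M = U * Matrix.diagonal ρ * Uᵀ)
    (Xs : Matrix (Fin n) (Fin n) ℝ)
    (hXs : Xs = U * Matrix.diagonal
        (fun i => (-ρ i + Real.sqrt ((ρ i) ^ 2 + 4 * σ)) / (2 * σ)) * Uᵀ) :
    Xs.PosDef ∧
      ∀ X : Matrix (Fin n) (Fin n) ℝ, X.PosDef →
        (∑ i, ∑ j, Xs i j * C i j) - Real.log Xs.det
            + (σ / 2) * ∑ i, ∑ j, (Xs i j - M i j) ^ 2
          ≤ (∑ i, ∑ j, X i j * C i j) - Real.log X.det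
            + (σ / 2) * ∑ i, ∑ j, (X i j - M i j) ^ 2 :=
  X_subproblem_minimizer_general n σ hσ C M U hU ρ hdecomp Xs hXs
end
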